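/- Let C : ℤ → U(2) satisfy the standing Assumption with supp(C−I₂) ≠ ∅, set k = |chs(C−I₂)|_ℤ, and let U = S∘C. Let M = 1_J U 1_J with J = chs(C−I₂), regarded as a linear operator on the (2k)-dimensional space of maps ℤ → ℂ² supported in J. Then the sum of the algebraic multiplicities of all nonzero eigenvalues of M is at most 2(k−1); in particular, the set of λ ∈ ℂ∖{0} for which there exists a nonzero outgoing solution φ of Uφ = λφ is finite with cardinality at most 2(k−1). -/

import Mathlib

noncomputable section

open scoped ComplexConjugate

/-- A state: a map ℤ → ℂ², components `ψ x 0` (left, ψ^L) and `ψ x 1` (right, ψ^R). -/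
abbrev QWState := ℤ → Fin 2 → ℂ

/-- The quantum walk operator U = S∘C acting pointwise:
`(Uψ)(x) = ((C(x+1)ψ(x+1))₁, (C(x−1)ψ(x−1))₂)`. -/
def qwalk (C : ℤ → Matrix (Fin 2) (Fin 2) ℂ) (ψ : QWState) : QWState :=
  fun x => ![(C (x + 1)).mulVec (ψ (x + 1)) 0, (C (x - 1)).mulVec (ψ (x - 1)) 1]

/-- The standing Assumption on the coin. -/
structure CoinAssumption (C : ℤ → Matrix (Fin 2) (Fin 2) ℂ) : Prop where
  unitary : ∀ x, C x ∈ Matrix.unitaryGroup (Fin 2) ℂ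
  d11 : ∀ x, C x 0 0 ≠ 0
  d22 : ∀ x, C x 1 1 ≠ 0
  fin : Set.Finite {x : ℤ | C x ≠ 1}

/-- Outgoing: ψ^L vanishes far right, ψ^R vanishes far left. -/
def Outgoing (ψ : QWState) : Prop :=
  ∃ r : ℤ, 0 < r ∧ ∀ x : ℤ, r < x → ψ x 0 = 0 ∧ ψ (-x) 1 = 0

/-- Extension by zero of a map defined on J ∩ ℤ = [a,b] ∩ ℤ to all of ℤ. -/
def embed (a b : ℤ) (f : ↥(Set.Icc a b) → Fin 2 → ℂ) : QWState :=
  fun x => if hx : x ∈ Set.Icc a b then f ⟨x, hx⟩ else 0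

/-!
At the right end `xp` of `J` the left component of `Uψ` is read off from `xp + 1 ∉ J`, and at
the left end `xm` the right component from `xm - 1 ∉ J`; so every vector in the range of `M`
has these two coordinates equal to zero and `rank M ≤ 2k - 2`. Generalized eigenspaces are
independent and the kernel of `M` lies in the one for `0`, so the multiplicities of the nonzero
eigenvalues add up to at most `rank M`.

Outside `J` the coin is trivial and `Uφ = λφ` becomes a geometric recursion, so an outgoing
solution with `λ ≠ 0` has `φ^L = 0` on `[xp, ∞)` and `φ^R = 0` on `(-∞, xm]`. Consequently the
walk applied to `φ` restricted to `J` (and extended by zero) agrees with `Uφ` on `J`, and the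
restriction is a `λ`-eigenvector of `M`; it is nonzero because a solution vanishing on `J`
vanishes everywhere. Each resonance is thus an eigenvalue of `M`.
-/

open Module Matrix

section FiniteDimensional

variable {K V : Type*} [Field K] [AddCommGroup V] [Module K V] [FiniteDimensional K V]

theorem iSupIndep.sum_finrank_le {ι : Type*} {p : ι → Submodule K V} (hp : iSupIndep p)
    (s : Finset ι) : ∑ i ∈ s, finrank K (p i) ≤ finrank K V := by
  suffices ∑ i ∈ s, finrank K (p i) = finrank K ↥(s.sup p) from this ▸ Submodule.finrank_le _
  induction s using Finset.cons_induction with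
  | empty => rw [Finset.sum_empty, Finset.sup_empty, finrank_bot]
  | cons a s ha ih =>
    have hdisj : Disjoint (p a) (s.sup p) := by
      rw [Finset.sup_eq_iSup]
      exact hp.disjoint_biSup ha
    have hsup := Submodule.finrank_sup_add_finrank_inf_eq (p a) (s.sup p)
    rw [hdisj.eq_bot, finrank_bot, add_zero] at hsup
    rw [Finset.sum_cons, Finset.sup_cons, ih, hsup]

namespace Module.End

theorem sum_finrank_maxGenEigenspace_le_finrank_range (f : End K V) {s : Finset K}
    (hs : 0 ∉ s) :
    ∑ μ ∈ s, finrank K (f.maxGenEigenspace μ) ≤ finrank K (LinearMap.range f) := by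
  classical
  have hsum := f.independent_maxGenEigenspace.sum_finrank_le (insert 0 s)
  rw [Finset.sum_insert hs] at hsum
  have hker : finrank K (LinearMap.ker f) ≤ finrank K (f.maxGenEigenspace 0) :=
    Submodule.finrank_mono (f.eigenspace_zero ▸ eigenspace_le_maxGenEigenspace)
  have := LinearMap.finrank_range_add_finrank_ker f
  omega

theorem card_le_sum_finrank_maxGenEigenspace (f : End K V) {s : Finset K}
    (hs : ∀ μ ∈ s, f.HasEigenvalue μ) :
    s.card ≤ ∑ μ ∈ s, finrank K (f.maxGenEigenspace μ) := by
  rw [Finset.card_eq_sum_ones]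
  refine Finset.sum_le_sum fun μ hμ => Submodule.one_le_finrank_iff.mpr ?_
  exact ne_bot_of_le_ne_bot (hs μ hμ) eigenspace_le_maxGenEigenspace

end Module.End

end FiniteDimensional

theorem finrank_add_two_le_of_eq_zero {K ι : Type*} [Field K] [Fintype ι]
    (p q : ι) {W : Submodule K (ι → Fin 2 → K)} (hW : ∀ f ∈ W, f p 0 = 0 ∧ f q 1 = 0) :
    finrank K W + 2 ≤ 2 * Fintype.card ι := by
  classical
  let E : (ι → Fin 2 → K) →ₗ[K] K × K :=
    { toFun f := (f p 0, f q 1), map_add' _ _ := rfl, map_smul' _ _ := rfl }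
  have hE : LinearMap.range E = ⊤ := LinearMap.range_eq_top.mpr fun c =>
    ⟨fun z => ![if z = p then c.1 else 0, if z = q then c.2 else 0], by simp [E]⟩
  have hWE : finrank K W ≤ finrank K (LinearMap.ker E) :=
    Submodule.finrank_mono fun f hf => by simp [E, hW f hf]
  have := LinearMap.finrank_range_add_finrank_ker E
  rw [hE, finrank_top, finrank_prod, finrank_self, finrank_pi_fintype] at this
  simp only [finrank_fintype_fun_eq_card, Fintype.card_fin, Finset.sum_const, Finset.card_univ,
    smul_eq_mul] at this
  omega

theorem eq_zero_of_geometric_of_eventually_zero {R : Type*} [MulZeroClass R] [NoZeroDivisors R]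
    {u : ℤ → R} {lam : R} (hlam : lam ≠ 0) {a r : ℤ} (hrec : ∀ x ≥ a, u (x + 1) = lam * u x)
    (hzero : ∀ x > r, u x = 0) : ∀ x ≥ a, u x = 0 := by
  suffices ∀ n : ℕ, ∀ x ≥ a, r < x + n → u x = 0 from
    fun x hx => this (r - x + 1).toNat x hx (by omega)
  intro n
  induction n with
  | zero => exact fun x _ hx => hzero x (by simpa using hx)
  | succ n ih =>
    intro x hx hxn
    have := hrec x hx
    rw [ih (x + 1) (by omega) (by push_cast at hxn; omega)] at this
    exact (mul_eq_zero.mp this.symm).resolve_left hlam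

theorem qwalk_apply_zero (C : ℤ → Matrix (Fin 2) (Fin 2) ℂ) (ψ : QWState) (x : ℤ) :
    qwalk C ψ x 0 = (C (x + 1) *ᵥ ψ (x + 1)) 0 := rfl

theorem qwalk_apply_one (C : ℤ → Matrix (Fin 2) (Fin 2) ℂ) (ψ : QWState) (x : ℤ) :
    qwalk C ψ x 1 = (C (x - 1) *ᵥ ψ (x - 1)) 1 := rfl

section Embed

variable {a b x : ℤ}

theorem embed_of_mem (f : Set.Icc a b → Fin 2 → ℂ) (hx : x ∈ Set.Icc a b) :
    embed a b f x = f ⟨x, hx⟩ := dif_pos hx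

theorem embed_of_notMem (f : Set.Icc a b → Fin 2 → ℂ) (hx : x ∉ Set.Icc a b) :
    embed a b f x = 0 := dif_neg hx

theorem qwalk_embed_right_zero (C : ℤ → Matrix (Fin 2) (Fin 2) ℂ) (f : Set.Icc a b → Fin 2 → ℂ) :
    qwalk C (embed a b f) b 0 = 0 := by
  rw [qwalk_apply_zero, embed_of_notMem f (by simp), mulVec_zero, Pi.zero_apply]

theorem qwalk_embed_left_one (C : ℤ → Matrix (Fin 2) (Fin 2) ℂ) (f : Set.Icc a b → Fin 2 → ℂ) :
    qwalk C (embed a b f) a 1 = 0 := by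
  rw [qwalk_apply_one, embed_of_notMem f (by simp), mulVec_zero, Pi.zero_apply]

end Embed

section Support

variable {α : Type*} [One α] {C : ℤ → α} {a b x : ℤ}

theorem eq_one_of_lt_of_support (hC : ∀ x, C x ≠ 1 → a ≤ x ∧ x ≤ b) (hx : x < a) : C x = 1 :=
  by_contra fun h => absurd (hC x h).1 (by omega)

theorem eq_one_of_gt_of_support (hC : ∀ x, C x ≠ 1 → a ≤ x ∧ x ≤ b) (hx : b < x) : C x = 1 :=
  by_contra fun h => absurd (hC x h).2 (by omega)

end Support

section Eigenfunction

variable {C : ℤ → Matrix (Fin 2) (Fin 2) ℂ} {φ : QWState} {lam : ℂ} {a b : ℤ}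
  (hlam : lam ≠ 0) (heig : ∀ x i, qwalk C φ x i = lam * φ x i)
include hlam heig

theorem left_eq_zero_of_outgoing (hC : ∀ x > b, C x = 1) (hφ : Outgoing φ) :
    ∀ x ≥ b, φ x 0 = 0 := by
  obtain ⟨r, -, hr⟩ := hφ
  refine eq_zero_of_geometric_of_eventually_zero (u := fun x => φ x 0) hlam
    (fun x hx => ?_) fun x hx => (hr x hx).1
  rw [← heig x 0, qwalk_apply_zero, hC (x + 1) (by omega), one_mulVec]

theorem right_eq_zero_of_outgoing (hC : ∀ x < a, C x = 1) (hφ : Outgoing φ) :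
    ∀ x ≤ a, φ x 1 = 0 := by
  obtain ⟨r, -, hr⟩ := hφ
  have hrefl := eq_zero_of_geometric_of_eventually_zero (u := fun x => φ (-x) 1) hlam (a := -a)
    (fun x hx => ?_) fun x hx => (hr x hx).2
  · exact fun x hx => by simpa using hrefl (-x) (by omega)
  · rw [← heig (-x) 1, qwalk_apply_one, neg_add', hC _ (by omega), one_mulVec]

theorem right_succ_eq_zero {x : ℤ} (hx : φ x = 0) : φ (x + 1) 1 = 0 := by
  have := heig (x + 1) 1
  rw [qwalk_apply_one, add_sub_cancel_right, hx, mulVec_zero] at this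
  exact (mul_eq_zero.mp this.symm).resolve_left hlam

theorem left_pred_eq_zero {x : ℤ} (hx : φ x = 0) : φ (x - 1) 0 = 0 := by
  have := heig (x - 1) 0
  rw [qwalk_apply_zero, sub_add_cancel, hx, mulVec_zero] at this
  exact (mul_eq_zero.mp this.symm).resolve_left hlam

theorem eq_zero_of_eqOn_Icc (hab : a ≤ b) (hC : ∀ x, C x ≠ 1 → a ≤ x ∧ x ≤ b)
    (hφ : Outgoing φ) (hJ : Set.EqOn φ 0 (Set.Icc a b)) : φ = 0 := by
  have hL := left_eq_zero_of_outgoing hlam heig (fun _ => eq_one_of_gt_of_support hC) hφ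
  have hR := right_eq_zero_of_outgoing hlam heig (fun _ => eq_one_of_lt_of_support hC) hφ
  have hright : ∀ x ≥ b, φ x = 0 := fun x hx => by
    induction x, hx using Int.leInduction with
    | base => exact hJ ⟨hab, le_rfl⟩
    | succ x hx ih =>
      funext i
      fin_cases i
      exacts [hL _ (by omega), right_succ_eq_zero hlam heig ih]
  have hleft : ∀ x ≤ a, φ x = 0 := fun x hx => by
    induction x, hx using Int.leInductionDown with
    | base => exact hJ ⟨le_rfl, hab⟩
    | pred x hx ih =>
      funext i
      fin_cases i
      exacts [left_pred_eq_zero hlam heig ih, hR _ (by omega)]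
  funext x
  by_cases hxb : b ≤ x
  · exact hright x hxb
  by_cases hxa : x ≤ a
  · exact hleft x hxa
  exact hJ ⟨by omega, by omega⟩

theorem hasEigenvector_domRestrict_of_outgoing (hab : a ≤ b)
    (hC : ∀ x, C x ≠ 1 → a ≤ x ∧ x ≤ b) {M : Module.End ℂ (Set.Icc a b → Fin 2 → ℂ)}
    (hM : ∀ f z, M f z = qwalk C (embed a b f) z) (hφ0 : φ ≠ 0) (hφ : Outgoing φ) :
    M.HasEigenvector lam ((Set.Icc a b).domRestrict φ) := by
  have hL := left_eq_zero_of_outgoing hlam heig (fun _ => eq_one_of_gt_of_support hC) hφ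
  have hR := right_eq_zero_of_outgoing hlam heig (fun _ => eq_one_of_lt_of_support hC) hφ
  have hwalk : ∀ z ∈ Set.Icc a b,
      qwalk C (embed a b ((Set.Icc a b).domRestrict φ)) z = qwalk C φ z := by
    rintro z ⟨hza, hzb⟩
    refine funext <| Fin.forall_fin_two.mpr ⟨?_, ?_⟩
    · rw [qwalk_apply_zero, qwalk_apply_zero]
      by_cases hz : z + 1 ≤ b
      · rw [embed_of_mem _ ⟨by omega, hz⟩, Set.domRestrict_apply]
      · rw [embed_of_notMem _ (by simp; omega), mulVec_zero,
          eq_one_of_gt_of_support hC (by omega : b < z + 1), one_mulVec, hL (z + 1) (by omega),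
          Pi.zero_apply]
    · rw [qwalk_apply_one, qwalk_apply_one]
      by_cases hz : a ≤ z - 1
      · rw [embed_of_mem _ ⟨hz, by omega⟩, Set.domRestrict_apply]
      · rw [embed_of_notMem _ (by simp; omega), mulVec_zero,
          eq_one_of_lt_of_support hC (by omega : z - 1 < a), one_mulVec, hR (z - 1) (by omega),
          Pi.zero_apply]
  refine ⟨Module.End.mem_eigenspace_iff.mpr (funext fun z => ?_), fun h => hφ0 ?_⟩
  · rw [hM, hwalk z z.2]
    exact funext (heig z)
  · exact eq_zero_of_eqOn_Icc hlam heig hab hC hφ fun x hx => congrFun h ⟨x, hx⟩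

end Eigenfunction

theorem finrank_range_add_two_le {C : ℤ → Matrix (Fin 2) (Fin 2) ℂ} {a b : ℤ} (hab : a ≤ b)
    {M : Module.End ℂ (Set.Icc a b → Fin 2 → ℂ)} (hM : ∀ f z, M f z = qwalk C (embed a b f) z) :
    finrank ℂ (LinearMap.range M) + 2 ≤ 2 * Fintype.card (Set.Icc a b) := by
  refine finrank_add_two_le_of_eq_zero ⟨b, hab, le_rfl⟩ ⟨a, le_rfl, hab⟩ ?_
  rintro _ ⟨f, rfl⟩
  rw [hM, hM]
  exact ⟨qwalk_embed_right_zero C f, qwalk_embed_left_one C f⟩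

theorem sum_of_multiplicities_le_general
    (C : ℤ → Matrix (Fin 2) (Fin 2) ℂ)
    (xm xp : ℤ) (hxm : C xm ≠ 1)
    (hsupp : ∀ x : ℤ, C x ≠ 1 → xm ≤ x ∧ x ≤ xp)
    (M : Module.End ℂ (↥(Set.Icc xm xp) → Fin 2 → ℂ))
    (hM : ∀ f : ↥(Set.Icc xm xp) → Fin 2 → ℂ, ∀ z : ↥(Set.Icc xm xp),
      M f z = qwalk C (embed xm xp f) (z : ℤ)) :
    (∀ s : Finset ℂ, (∀ lam ∈ s, lam ≠ 0 ∧ M.HasEigenvalue lam) →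
        ((∑ lam ∈ s, Module.finrank ℂ ↥(M.maxGenEigenspace lam) : ℕ) : ℤ)
          ≤ 2 * (xp - xm)) ∧
      (∀ s : Finset ℂ, (∀ lam ∈ s, lam ≠ 0 ∧
          ∃ φ : QWState, (∃ x : ℤ, ∃ i : Fin 2, φ x i ≠ 0) ∧ Outgoing φ ∧
            (∀ x : ℤ, ∀ i : Fin 2, qwalk C φ x i = lam * φ x i)) →
        ((s.card : ℕ) : ℤ) ≤ 2 * (xp - xm)) := by
  have hle : xm ≤ xp := (hsupp xm hxm).2
  have hsum : ∀ s : Finset ℂ, 0 ∉ s →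
      ((∑ lam ∈ s, finrank ℂ (M.maxGenEigenspace lam) : ℕ) : ℤ) ≤ 2 * (xp - xm) := by
    intro s hs
    have hrange := finrank_range_add_two_le hle hM
    have hcard := Int.card_fintype_Icc_of_le xm xp (by omega)
    have := M.sum_finrank_maxGenEigenspace_le_finrank_range hs
    omega
  refine ⟨fun s hs => hsum s fun h0 => (hs 0 h0).1 rfl, fun s hs => ?_⟩
  have hev : ∀ lam ∈ s, M.HasEigenvalue lam := by
    intro lam hlam
    obtain ⟨hlam0, φ, ⟨x, i, hφx⟩, hφ, heig⟩ := hs lam hlam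
    refine Module.End.hasEigenvalue_of_hasEigenvector <|
      hasEigenvector_domRestrict_of_outgoing hlam0 heig hle hsupp hM (fun h => hφx ?_) hφ
    simp [h]
  calc ((s.card : ℕ) : ℤ) ≤ ((∑ lam ∈ s, finrank ℂ (M.maxGenEigenspace lam) : ℕ) : ℤ) :=
        Nat.cast_le.mpr (M.card_le_sum_finrank_maxGenEigenspace hev)
    _ ≤ 2 * (xp - xm) := hsum s fun h0 => (hs 0 h0).1 rfl

/-- Bound on the number of nonzero resonances: with chs(C−I₂) = [xm, xp] and
k = xp − xm + 1, the sum of the algebraic multiplicities of all nonzero eigenvalues of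
M = 1_J U 1_J (J = chs(C−I₂)) is at most 2(k−1); in particular the set of nonzero
resonances has at most 2(k−1) elements. -/
theorem sum_of_multiplicities_le
    (C : ℤ → Matrix (Fin 2) (Fin 2) ℂ) (hC : CoinAssumption C)
    (xm xp : ℤ) (hxm : C xm ≠ 1) (hxp : C xp ≠ 1)
    (hsupp : ∀ x : ℤ, C x ≠ 1 → xm ≤ x ∧ x ≤ xp)
    (M : Module.End ℂ (↥(Set.Icc xm xp) → Fin 2 → ℂ))
    (hM : ∀ f : ↥(Set.Icc xm xp) → Fin 2 → ℂ, ∀ z : ↥(Set.Icc xm xp),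
      M f z = qwalk C (embed xm xp f) (z : ℤ)) :
    (∀ s : Finset ℂ, (∀ lam ∈ s, lam ≠ 0 ∧ M.HasEigenvalue lam) →
        ((∑ lam ∈ s, Module.finrank ℂ ↥(M.maxGenEigenspace lam) : ℕ) : ℤ)
          ≤ 2 * (xp - xm)) ∧
      (∀ s : Finset ℂ, (∀ lam ∈ s, lam ≠ 0 ∧
          ∃ φ : QWState, (∃ x : ℤ, ∃ i : Fin 2, φ x i ≠ 0) ∧ Outgoing φ ∧
            (∀ x : ℤ, ∀ i : Fin 2, qwalk C φ x i = lam * φ x i)) →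
        ((s.card : ℕ) : ℤ) ≤ 2 * (xp - xm)) :=
  sum_of_multiplicities_le_general C xm xp hxm hsupp M hM
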